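/- arXiv:1802.01137 — 2 statements merged into one kernel-verified Lean document; each statement's English description precedes it below -/
import Mathlib

section
/- Assume the Continuum Hypothesis. Then for every real number a with 0 < a ≤ 1, the principle ♣^{inf≥a} implies the diamond principle ◊. -/
open Filter Set

noncomputable def omega1 : Ordinal.{0} := (Cardinal.aleph 1).ord

/-- The set of countable limit ordinals, `Lim(ω₁)`. -/
def limOmega1 : Set Ordinal.{0} := {δ | δ < omega1 ∧ Order.IsSuccLimit δ}

/-- `C` is a closed unbounded subset of `ω₁`. -/
def IsClubIn (C : Set Ordinal.{0}) : Prop :=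
  C ⊆ Set.Iio omega1 ∧
  (∀ δ, δ < omega1 → Order.IsSuccLimit δ → (∀ β < δ, ∃ γ ∈ C, β < γ ∧ γ < δ) → δ ∈ C) ∧
  (∀ β, β < omega1 → ∃ γ ∈ C, β < γ)

/-- `S` is a stationary subset of `ω₁`. -/
def IsStatIn (S : Set Ordinal.{0}) : Prop :=
  S ⊆ Set.Iio omega1 ∧ ∀ C, IsClubIn C → (S ∩ C).Nonempty

open scoped Classical in
/-- `|{k < n : α k ∈ A}| / n` as a real number. -/
noncomputable def hitRatio (α : ℕ → Ordinal.{0}) (A : Set Ordinal.{0}) (n : ℕ) : ℝ :=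
  ((Finset.range n).filter (fun k => α k ∈ A)).card / n

/-- `α` assigns to each `δ ∈ S` a strictly increasing sequence cofinal in `δ`. -/
def GoodSeq (S : Set Ordinal.{0}) (α : Ordinal.{0} → ℕ → Ordinal.{0}) : Prop :=
  ∀ δ ∈ S, StrictMono (α δ) ∧ (∀ n, α δ n < δ) ∧ (∀ β < δ, ∃ n, β < α δ n)

/-- The principle `♣_S^{inf ≥ a}`. -/
def ClubSuitInf (S : Set Ordinal.{0}) (a : ℝ) : Prop :=
  ∃ α : Ordinal.{0} → ℕ → Ordinal.{0}, GoodSeq S α ∧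
    ∀ A : Set Ordinal.{0}, A ⊆ Set.Iio omega1 → ¬ A.Countable →
      ∃ δ ∈ S, a ≤ Filter.liminf (hitRatio (α δ) A) Filter.atTop

/-- The principle `♣_S^{sup ≥ a}`. -/
def ClubSuitSup (S : Set Ordinal.{0}) (a : ℝ) : Prop :=
  ∃ α : Ordinal.{0} → ℕ → Ordinal.{0}, GoodSeq S α ∧
    ∀ A : Set Ordinal.{0}, A ⊆ Set.Iio omega1 → ¬ A.Countable →
      ∃ δ ∈ S, a ≤ Filter.limsup (hitRatio (α δ) A) Filter.atTop

/-- The diamond principle `◊` on `ω₁`. -/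
def DiamondOmega1 : Prop :=
  ∃ B : Ordinal.{0} → Set Ordinal.{0}, (∀ δ ∈ limOmega1, B δ ⊆ Set.Iio δ) ∧
    ∀ A : Set Ordinal.{0}, A ⊆ Set.Iio omega1 →
      IsStatIn {δ ∈ limOmega1 | A ∩ Set.Iio δ = B δ}

/-!
Under CH the bounded subsets of `ℕ × ω₁` can be listed as `⟨x β : β < ω₁⟩` with every set
occurring cofinally often. Given `B ⊆ ℕ × ω₁` and a club `C`, pick for each `γ` an index
`F γ > γ` of `B ∩ (ℕ × γ)`, and let `E` be the set of values of `F` at closure points of `F`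
in `C`. `E` is uncountable, so some `♣`-sequence `α_δ` meets `E` with lower density `≥ a`;
closure makes `δ` a limit of `C` and makes `x (α_δ k)` agree with `B` below any fixed `γ < δ`
for all but finitely many of these `k`. Distinct sets guessed in this way at `δ` already differ
below some `γ < δ`, so their index sets are disjoint, and there are at most `1 / a` of them.
Countably many guesses at each `δ` suffice for `◊`: code a potential counterexample `A m` for
every guess `m` into the single set `{(m, ξ) | ξ ∈ A m}`.
-/

open Ordinal Cardinal Order

lemma isSuccLimit_omega1 : IsSuccLimit omega1 :=
  isSuccLimit_ord (aleph0_le_aleph 1)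

lemma countable_Iio_of_lt_omega1 {β : Ordinal.{0}} (hβ : β < omega1) : (Iio β).Countable := by
  have hcard := lt_ord.1 hβ
  rw [← succ_aleph0, lt_succ_iff] at hcard
  rw [← le_aleph0_iff_set_countable, Cardinal.mk_Iio_ordinal]
  exact lift_le_aleph0.2 hcard

lemma countable_iff_exists_lt_omega1 {S : Set Ordinal.{0}} (hS : S ⊆ Iio omega1) :
    S.Countable ↔ ∃ β < omega1, S ⊆ Iio β := by
  refine ⟨fun hc => ?_, fun ⟨β, hβ, hSβ⟩ => (countable_Iio_of_lt_omega1 hβ).mono hSβ⟩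
  have : Countable S := hc.to_subtype
  refine ⟨⨆ γ : S, succ γ.1, ?_, fun γ hγ => ?_⟩
  · rw [omega1, ord_aleph]
    exact iSup_lt_omega_one fun γ => by
      rw [← ord_aleph]; exact isSuccLimit_omega1.succ_lt (hS γ.2)
  · exact (lt_succ γ).trans_le (Ordinal.le_iSup (fun γ : S => succ γ.1) ⟨γ, hγ⟩)

lemma not_countable_Iio_omega1 : ¬ (Iio omega1).Countable := fun hc =>
  let ⟨β, hβ, hsub⟩ := (countable_iff_exists_lt_omega1 subset_rfl).1 hc
  lt_irrefl β (hsub hβ)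

lemma exists_gt_of_not_countable {S : Set Ordinal.{0}} (hS : S ⊆ Iio omega1)
    (hunc : ¬ S.Countable) {β : Ordinal.{0}} (hβ : β < omega1) : ∃ γ ∈ S, β < γ := by
  by_contra! hle
  exact hunc <| (countable_iff_exists_lt_omega1 hS).2
    ⟨succ β, isSuccLimit_omega1.succ_lt hβ, fun γ hγ => lt_succ_iff.2 (hle γ hγ)⟩

lemma not_countable_of_forall_exists_gt {S : Set Ordinal.{0}} (hS : S ⊆ Iio omega1)
    (hunb : ∀ β < omega1, ∃ γ ∈ S, β < γ) : ¬ S.Countable := fun hc =>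
  let ⟨β, hβ, hsub⟩ := (countable_iff_exists_lt_omega1 hS).1 hc
  let ⟨_, hγ, hβγ⟩ := hunb β hβ
  (hsub hγ).not_gt hβγ

lemma exists_lt_omega1_forall_le_apply_lt {F : Ordinal.{0} → Ordinal.{0}}
    (hF : ∀ γ < omega1, F γ < omega1) {ρ : Ordinal.{0}} (hρ : ρ < omega1) :
    ∃ ρ' < omega1, ∀ γ ≤ ρ, F γ < ρ' := by
  have hcount : (F '' Iic ρ).Countable := by
    rw [← Iio_succ]
    exact (countable_Iio_of_lt_omega1 (isSuccLimit_omega1.succ_lt hρ)).image _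
  obtain ⟨ρ', hρ', hsub⟩ := (countable_iff_exists_lt_omega1
    (image_subset_iff.2 fun γ hγ => hF γ (lt_of_le_of_lt hγ hρ))).1 hcount
  exact ⟨ρ', hρ', fun γ hγ => hsub ⟨γ, hγ, rfl⟩⟩

lemma exists_limOmega1_closed_under {F : Ordinal.{0} → Ordinal.{0}}
    (hF : ∀ γ < omega1, F γ < omega1) {β : Ordinal.{0}} (hβ : β < omega1) :
    ∃ δ ∈ limOmega1, β < δ ∧ ∀ γ < δ, F γ < δ := by
  choose! H hHlt hH using fun ρ (hρ : ρ < omega1) => exists_lt_omega1_forall_le_apply_lt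
    (F := fun γ => max (F γ) γ) (fun γ hγ => max_lt (hF γ hγ) hγ) hρ
  simp only [max_lt_iff] at hH
  have hnfp : nfp H β < omega1 := by
    refine nfp_lt_ord ?_ hHlt hβ
    rw [omega1, ord_aleph, cof_omega_one]
    exact aleph0_lt_aleph_one
  have hiter : ∀ n, H^[n] β < omega1 := fun n => (iterate_le_nfp H β n).trans_lt hnfp
  have hclosed : ∀ γ < nfp H β, F γ < nfp H β ∧ succ γ < nfp H β := by
    intro γ hγ
    obtain ⟨n, hn⟩ := lt_nfp_iff.1 hγ
    have hle : H (H^[n] β) ≤ nfp H β := by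
      simpa only [Function.iterate_succ_apply'] using iterate_le_nfp H β (n + 1)
    have hsucc := (succ_le_of_lt hn).trans_lt (hH _ (hiter n) _ le_rfl).2
    exact ⟨(hH _ (hiter n) γ hn.le).1.trans_le hle, hsucc.trans_le hle⟩
  have hβδ : β < nfp H β := (hH β hβ β le_rfl).2.trans_le (iterate_le_nfp H β 1)
  refine ⟨nfp H β, ⟨hnfp, ?_⟩, hβδ, fun γ hγ => (hclosed γ hγ).1⟩
  exact (Order.isSuccLimit_iff _).2
    ⟨not_isMin_of_lt hβδ, isSuccPrelimit_of_succ_lt fun γ hγ => (hclosed γ hγ).2⟩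

lemma IsClubIn.exists_mem_closed_under {C : Set Ordinal.{0}} (hC : IsClubIn C)
    {F : Ordinal.{0} → Ordinal.{0}} (hF : ∀ γ < omega1, F γ < omega1)
    {β : Ordinal.{0}} (hβ : β < omega1) :
    ∃ δ ∈ limOmega1 ∩ C, β < δ ∧ ∀ γ < δ, F γ < δ := by
  choose! next hnextC hnext using hC.2.2
  obtain ⟨δ, hδ, hβδ, hclosed⟩ := exists_limOmega1_closed_under (F := fun γ => max (F γ) (next γ))
    (fun γ hγ => max_lt (hF γ hγ) (hC.1 (hnextC γ hγ))) hβ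
  refine ⟨δ, ⟨hδ, hC.2.1 δ hδ.1 hδ.2 fun γ hγ => ?_⟩, hβδ, fun γ hγ => ?_⟩
  · exact ⟨next γ, hnextC γ (hγ.trans hδ.1), hnext γ (hγ.trans hδ.1),
      (le_max_right _ _).trans_lt (hclosed γ hγ)⟩
  · exact (le_max_left _ _).trans_lt (hclosed γ hγ)

lemma isClubIn_iInter {ι : Type*} [Countable ι] [Nonempty ι] {C : ι → Set Ordinal.{0}}
    (hC : ∀ i, IsClubIn (C i)) : IsClubIn (⋂ i, C i) := by
  refine ⟨(iInter_subset C (Classical.arbitrary ι)).trans (hC _).1,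
    fun δ hδ hlim hcof => mem_iInter.2 fun i => (hC i).2.1 δ hδ hlim fun β hβ => ?_,
    fun β hβ => ?_⟩
  · obtain ⟨γ, hγ, hβγ⟩ := hcof β hβ
    exact ⟨γ, mem_iInter.1 hγ i, hβγ⟩
  choose! next hnextC hnext using fun i => (hC i).2.2
  have hnext_lt : ∀ γ < omega1, ⨆ i, next i γ < omega1 := by
    intro γ hγ
    rw [omega1, ord_aleph]
    exact iSup_lt_omega_one fun i => by rw [← ord_aleph]; exact (hC i).1 (hnextC i γ hγ)
  obtain ⟨δ, hδ, hβδ, hclosed⟩ := exists_limOmega1_closed_under hnext_lt hβ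
  refine ⟨δ, mem_iInter.2 fun i => (hC i).2.1 δ hδ.1 hδ.2 fun γ hγ => ?_, hβδ⟩
  exact ⟨next i γ, hnextC i γ (hγ.trans hδ.1), hnext i γ (hγ.trans hδ.1),
    (Ordinal.le_iSup (fun i => next i γ) i).trans_lt (hclosed γ hγ)⟩

open scoped Classical in
/-- Lower density `≥ a`, phrased without `liminf` so that no boundedness side conditions arise. -/
def LowerDensityGe (a : ℝ) (K : Set ℕ) : Prop :=
  ∀ b < a, ∀ᶠ n in atTop, b * n ≤ ((Finset.range n).filter (· ∈ K)).card

lemma lowerDensityGe_of_le_liminf_hitRatio {α : ℕ → Ordinal.{0}} {A : Set Ordinal.{0}} {a : ℝ}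
    (h : a ≤ liminf (hitRatio α A) atTop) : LowerDensityGe a {k | α k ∈ A} := by
  intro b hb
  have hbdd : IsBoundedUnder (· ≥ ·) atTop (hitRatio α A) :=
    isBoundedUnder_of ⟨0, fun n => by unfold hitRatio; positivity⟩
  filter_upwards [eventually_lt_of_lt_liminf (hb.trans_le h) hbdd, eventually_gt_atTop 0]
    with n hn hn0
  exact ((lt_div_iff₀ (Nat.cast_pos.2 hn0)).1 hn).le

namespace LowerDensityGe

variable {a : ℝ} {K : Set ℕ}

lemma mono_of_finite_diff {K' : Set ℕ} (hK : LowerDensityGe a K) (hfin : (K \ K').Finite) :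
    LowerDensityGe a K' := by
  classical
  intro b hb
  have hcard : ∀ n, (((Finset.range n).filter (· ∈ K)).card : ℝ) ≤
      ((Finset.range n).filter (· ∈ K')).card + hfin.toFinset.card := by
    intro n
    norm_cast
    refine (Finset.card_le_card fun k hk => ?_).trans (Finset.card_union_le _ _)
    simp only [Finset.mem_union, Finset.mem_filter, Finite.mem_toFinset, Set.mem_sdiff] at hk ⊢
    tauto
  have hsmall : ∀ᶠ n : ℕ in atTop, (hfin.toFinset.card : ℝ) ≤ (a - b) / 2 * n :=
    (tendsto_natCast_atTop_atTop.const_mul_atTop (by linarith)).eventually_ge_atTop _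
  filter_upwards [hK ((a + b) / 2) (by linarith), hsmall] with n hn hn'
  nlinarith [hcard n]

lemma infinite (ha : 0 < a) (hK : LowerDensityGe a K) : K.Infinite := by
  intro hfin
  have hempty := hK.mono_of_finite_diff (K' := ∅) hfin.sdiff
  obtain ⟨n, hn, hn1⟩ := ((hempty (a / 2) (by linarith)).and (eventually_gt_atTop 0)).exists
  simp only [mem_empty_iff_false, Finset.filter_false, Finset.card_empty, Nat.cast_zero] at hn
  exact (mul_pos (half_pos ha) (Nat.cast_pos.2 hn1)).not_ge hn

lemma card_mul_le_one {ι : Type*} {t : Finset ι} {K : ι → Set ℕ}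
    (hdisj : (t : Set ι).PairwiseDisjoint K) (hK : ∀ i ∈ t, LowerDensityGe a (K i)) :
    t.card * a ≤ 1 := by
  classical
  have hsum : ∀ n, ∑ i ∈ t, ((Finset.range n).filter (· ∈ K i)).card ≤ n := by
    intro n
    rw [← Finset.card_biUnion]
    · exact (Finset.card_le_card (Finset.biUnion_subset.2 fun i _ =>
        Finset.filter_subset _ _)).trans_eq (Finset.card_range n)
    · intro i hi j hj hij
      simp only [Function.onFun, Finset.disjoint_left, Finset.mem_filter]
      exact fun k hki hkj => Set.disjoint_left.1 (hdisj hi hj hij) hki.2 hkj.2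
  refine le_of_forall_lt_imp_le_of_dense fun c hc => ?_
  rcases (Nat.cast_nonneg t.card : (0 : ℝ) ≤ t.card).eq_or_lt with ht | ht
  · rw [← ht, zero_mul] at hc
    linarith
  have hb : c / t.card < a := (div_lt_iff₀' ht).2 hc
  obtain ⟨n, hn, hn0⟩ := (((Finset.eventually_all t).2 fun i hi => hK i hi _ hb).and
    (eventually_gt_atTop 0)).exists
  have hcn : c * n ≤ n := calc
    c * n = ∑ _i ∈ t, c / t.card * n := by
      rw [Finset.sum_const, _root_.nsmul_eq_mul]; field_simp
    _ ≤ ∑ i ∈ t, (((Finset.range n).filter (· ∈ K i)).card : ℝ) := Finset.sum_le_sum hn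
    _ ≤ n := by exact_mod_cast hsum n
  exact le_of_mul_le_mul_right (by linarith) (Nat.cast_pos.2 hn0)

end LowerDensityGe

section Truncation

variable {ι : Type*}

def truncBelow (u : Set (ι × Ordinal.{0})) (γ : Ordinal.{0}) : Set (ι × Ordinal.{0}) :=
  {p ∈ u | p.2 < γ}

lemma truncBelow_truncBelow_of_le {u : Set (ι × Ordinal.{0})} {γ η : Ordinal.{0}} (h : γ ≤ η) :
    truncBelow (truncBelow u η) γ = truncBelow u γ := by
  ext p
  simp only [truncBelow, mem_sep_iff, and_assoc,
    and_iff_right_of_imp fun hp : p.2 < γ => hp.trans_le h]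

lemma truncBelow_ne_of_le {u v : Set (ι × Ordinal.{0})} {γ η : Ordinal.{0}}
    (hne : truncBelow u γ ≠ truncBelow v γ) (h : γ ≤ η) : truncBelow u η ≠ truncBelow v η :=
  fun heq => hne (by rw [← truncBelow_truncBelow_of_le h, heq, truncBelow_truncBelow_of_le h])

lemma exists_truncBelow_ne_of_ne {u v : Set (ι × Ordinal.{0})} {δ : Ordinal.{0}}
    (hδ : IsSuccLimit δ) (hu : truncBelow u δ = u) (hv : truncBelow v δ = v) (hne : u ≠ v) :
    ∃ γ < δ, truncBelow u γ ≠ truncBelow v γ := by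
  by_contra! hagree
  have hmem : ∀ {w w' : Set (ι × Ordinal.{0})}, truncBelow w δ = w →
      (∀ γ < δ, truncBelow w γ = truncBelow w' γ) → w ⊆ w' := by
    intro w w' hw hww' p hp
    rw [← hw] at hp
    have hp' : p ∈ truncBelow w (succ p.2) := ⟨hp.1, lt_succ _⟩
    rw [hww' _ (hδ.succ_lt hp.2)] at hp'
    exact hp'.1
  exact hne (subset_antisymm (hmem hu hagree) (hmem hv fun γ hγ => (hagree γ hγ).symm))

end Truncation

section DensityGuesses

variable {ι : Type*}

def densityGuesses (a : ℝ) (s : ℕ → Set (ι × Ordinal.{0})) (δ : Ordinal.{0}) :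
    Set (Set (ι × Ordinal.{0})) :=
  {Y | truncBelow Y δ = Y ∧ ∀ γ < δ, LowerDensityGe a {k | truncBelow (s k) γ = truncBelow Y γ}}

variable {a : ℝ} {s : ℕ → Set (ι × Ordinal.{0})} {δ : Ordinal.{0}}

lemma card_mul_le_one_of_subset_densityGuesses (hδ : IsSuccLimit δ)
    {t : Finset (Set (ι × Ordinal.{0}))} (ht : ↑t ⊆ densityGuesses a s δ) : t.card * a ≤ 1 := by
  have hsep : ∀ Y ∈ t, ∀ Y' ∈ t, ∃ γ < δ, Y ≠ Y' → truncBelow Y γ ≠ truncBelow Y' γ := by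
    intro Y hY Y' hY'
    by_cases hne : Y = Y'
    · exact ⟨0, hδ.bot_lt, fun h => absurd hne h⟩
    · obtain ⟨γ, hγ, hγne⟩ := exists_truncBelow_ne_of_ne hδ (ht hY).1 (ht hY').1 hne
      exact ⟨γ, hγ, fun _ => hγne⟩
  choose! σ hσδ hσ using hsep
  set γ := t.sup fun Y => t.sup (σ Y)
  have hγδ : γ < δ := by
    simp only [γ, Finset.sup_lt_iff hδ.bot_lt]
    exact hσδ
  have hσγ : ∀ Y ∈ t, ∀ Y' ∈ t, σ Y Y' ≤ γ := fun Y hY Y' hY' =>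
    (Finset.le_sup hY').trans (Finset.le_sup (f := fun Y => t.sup (σ Y)) hY)
  refine LowerDensityGe.card_mul_le_one (K := fun Y => {k | truncBelow (s k) γ = truncBelow Y γ})
    (fun Y hY Y' hY' hne => Set.disjoint_left.2 fun k hk hk' => ?_) fun Y hY => (ht hY).2 γ hγδ
  exact truncBelow_ne_of_le (hσ Y hY Y' hY' hne) (hσγ Y hY Y' hY') (hk.symm.trans hk')

lemma finite_densityGuesses (ha : 0 < a) (hδ : IsSuccLimit δ) :
    (densityGuesses a s δ).Finite := by
  by_contra hinf
  obtain ⟨n, hn⟩ := exists_nat_gt a⁻¹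
  obtain ⟨t, ht, rfl⟩ := Set.Infinite.exists_subset_card_eq hinf n
  have := card_mul_le_one_of_subset_densityGuesses hδ ht
  rw [inv_lt_iff_one_lt_mul₀ ha] at hn
  linarith

end DensityGuesses

section Guessing

variable {F : Ordinal.{0} → Ordinal.{0}} {D : Set Ordinal.{0}} {δ : Ordinal.{0}}
  {s : ℕ → Ordinal.{0}}

lemma exists_mem_Ioo_of_infinite_hits (hFD : ∀ δ' ∈ D, δ' < F δ' ∧ ∀ γ < δ', F γ < δ')
    (hs : StrictMono s) (hsδ : ∀ n, s n < δ) (hcof : ∀ β < δ, ∃ n, β < s n)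
    (hhits : {k | s k ∈ F '' D}.Infinite) {ρ : Ordinal.{0}} (hρ : ρ < δ) :
    ∃ δ' ∈ D, ρ < δ' ∧ δ' < δ := by
  obtain ⟨n₀, hn₀⟩ := hcof ρ hρ
  obtain ⟨k₁, ⟨δ₁, hδ₁, hk₁⟩, hnk₁⟩ := hhits.exists_gt n₀
  obtain ⟨k₂, ⟨δ₂, hδ₂, hk₂⟩, hk₁₂⟩ := hhits.exists_gt k₁
  have hF₁₂ : F δ₁ < F δ₂ := hk₁ ▸ hk₂ ▸ hs hk₁₂
  have hδ₁₂ : δ₁ < δ₂ := by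
    refine lt_of_le_of_ne (not_lt.1 fun h => ?_) fun h => hF₁₂.ne (h ▸ rfl)
    exact ((hFD δ₁ hδ₁).2 δ₂ h).not_ge ((hFD δ₁ hδ₁).1.trans hF₁₂).le
  refine ⟨δ₂, hδ₂, ?_, (hFD δ₂ hδ₂).1.trans (hk₂ ▸ hsδ k₂)⟩
  calc ρ < s n₀ := hn₀
    _ < s k₁ := hs hnk₁
    _ = F δ₁ := hk₁.symm
    _ < δ₂ := (hFD δ₂ hδ₂).2 δ₁ hδ₁₂

lemma exists_forall_preimage_gt (hFD : ∀ δ' ∈ D, ∀ γ < δ', F γ < δ')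
    (hs : StrictMono s) (hcof : ∀ β < δ, ∃ n, β < s n)
    (hDcof : ∀ ρ < δ, ∃ δ' ∈ D, ρ < δ' ∧ δ' < δ) {γ : Ordinal.{0}} (hγ : γ < δ) :
    ∃ n₀, ∀ k, n₀ ≤ k → ∀ δ' ∈ D, s k = F δ' → γ < δ' := by
  obtain ⟨δ₀, hδ₀, hγδ₀, hδ₀δ⟩ := hDcof γ hγ
  obtain ⟨n₀, hn₀⟩ := hcof δ₀ hδ₀δ
  refine ⟨n₀, fun k hk δ' _ hδ' => hγδ₀.trans_le (not_lt.1 fun hlt => ?_)⟩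
  exact (hFD δ₀ hδ₀ δ' hlt).not_gt (hδ' ▸ hn₀.trans_le (hs.monotone hk))

end Guessing

theorem isStatIn_truncBelow_mem_densityGuesses {ι : Type*} {a : ℝ} (ha : 0 < a)
    {α : Ordinal.{0} → ℕ → Ordinal.{0}} (hα : GoodSeq limOmega1 α)
    (hguess : ∀ A : Set Ordinal.{0}, A ⊆ Iio omega1 → ¬ A.Countable →
      ∃ δ ∈ limOmega1, a ≤ liminf (hitRatio (α δ) A) atTop)
    {x : Ordinal.{0} → Set (ι × Ordinal.{0})} {B : Set (ι × Ordinal.{0})}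
    (hx : ∀ γ < omega1, ∀ β < omega1, ∃ β', β < β' ∧ β' < omega1 ∧ x β' = truncBelow B γ) :
    IsStatIn {δ ∈ limOmega1 | truncBelow B δ ∈ densityGuesses a (fun k => x (α δ k)) δ} := by
  refine ⟨fun δ hδ => hδ.1.1, fun C hC => ?_⟩
  choose! F hFgt hFlt hxF using fun γ hγ => hx γ hγ γ hγ
  set D := {δ' ∈ limOmega1 ∩ C | ∀ γ < δ', F γ < δ'}
  have hFD : ∀ δ' ∈ D, δ' < F δ' ∧ ∀ γ < δ', F γ < δ' := fun δ' hδ' =>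
    ⟨hFgt _ hδ'.1.1.1, hδ'.2⟩
  have hE : ¬ (F '' D).Countable := by
    refine not_countable_of_forall_exists_gt (image_subset_iff.2 fun δ' hδ' => hFlt _ hδ'.1.1.1)
      fun β hβ => ?_
    obtain ⟨δ', hδ'C, hβδ', hclosed⟩ := hC.exists_mem_closed_under hFlt hβ
    exact ⟨F δ', ⟨δ', ⟨hδ'C, hclosed⟩, rfl⟩, hβδ'.trans (hFgt δ' hδ'C.1.1)⟩
  obtain ⟨δ, hδ, hdens⟩ := hguess (F '' D) (image_subset_iff.2 fun δ' hδ' => hFlt _ hδ'.1.1.1) hE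
  obtain ⟨hs, hsδ, hcof⟩ := hα δ hδ
  have hhits := lowerDensityGe_of_le_liminf_hitRatio hdens
  have hDcof : ∀ ρ < δ, ∃ δ' ∈ D, ρ < δ' ∧ δ' < δ := fun ρ hρ =>
    exists_mem_Ioo_of_infinite_hits hFD hs hsδ hcof (hhits.infinite ha) hρ
  refine ⟨δ, ⟨hδ, truncBelow_truncBelow_of_le le_rfl, fun γ hγ => ?_⟩,
    hC.2.1 δ hδ.1 hδ.2 fun ρ hρ => ?_⟩
  · rw [truncBelow_truncBelow_of_le hγ.le]
    obtain ⟨n₀, hn₀⟩ := exists_forall_preimage_gt (fun δ' hδ' => (hFD δ' hδ').2) hs hcof hDcof hγ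
    refine hhits.mono_of_finite_diff ((finite_Iio n₀).subset fun k ⟨hk, hkgood⟩ => ?_)
    refine not_le.1 fun (hnk : n₀ ≤ k) => hkgood ?_
    obtain ⟨δ', hδ', hFδ'⟩ := hk
    show truncBelow (x (α δ k)) γ = truncBelow B γ
    rw [← hFδ', hxF δ' hδ'.1.1.1,
      truncBelow_truncBelow_of_le (hn₀ k hnk δ' hδ' hFδ'.symm).le]
  · obtain ⟨δ', hδ', hρδ', hδ'δ⟩ := hDcof ρ hρ
    exact ⟨δ', hδ'.1.2, hρδ', hδ'δ⟩

lemma two_power_aleph0_eq_aleph_one_transfer.{u, v}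
    (CH : (2 : Cardinal.{u}) ^ ℵ₀ = aleph 1) : (2 : Cardinal.{v}) ^ ℵ₀ = aleph 1 := by
  rw [two_power_aleph0] at CH ⊢
  apply Cardinal.lift_inj.{v, u}.1
  have := congrArg Cardinal.lift.{v} CH
  simp only [lift_continuum, lift_aleph, Ordinal.lift_one] at this ⊢
  exact this

lemma mk_Iio_omega1 : #(Iio omega1) = aleph 1 := by
  rw [Cardinal.mk_Iio_ordinal, omega1, card_ord, lift_aleph, Ordinal.lift_one]

lemma exists_unbounded_fibers {X : Type 1} [Nonempty X] (hX : #X ≤ aleph 1) :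
    ∃ x : Ordinal.{0} → X, ∀ u, ∀ β < omega1, ∃ β', β < β' ∧ β' < omega1 ∧ x β' = u := by
  have hcard : #(X × Iio omega1) ≤ #(Iio omega1) := by
    rw [mk_prod, Cardinal.lift_id, Cardinal.lift_id, mk_Iio_omega1]
    exact (mul_le_mul_left hX _).trans_eq (mul_eq_self (aleph0_le_aleph 1))
  obtain ⟨e⟩ := (le_def _ _).1 hcard
  have : Nonempty (Iio omega1) := ⟨⟨0, isSuccLimit_omega1.bot_lt⟩⟩
  refine ⟨fun β => if h : β < omega1 then (Function.invFun e ⟨β, h⟩).1 else Classical.arbitrary X,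
    fun u β hβ => ?_⟩
  have hinj : Function.Injective fun η => (e (u, η) : Ordinal.{0}) :=
    Subtype.val_injective.comp (e.injective.comp (Prod.mk_right_injective u))
  have hunc : ¬ (range fun η => (e (u, η) : Ordinal.{0})).Countable := fun hc => by
    have := hc.preimage hinj
    rw [preimage_range, countable_univ_iff, countable_coe_iff] at this
    exact not_countable_Iio_omega1 this
  obtain ⟨_, ⟨η, rfl⟩, hβη⟩ :=
    exists_gt_of_not_countable (range_subset_iff.2 fun η => (e (u, η)).2) hunc hβ
  refine ⟨_, hβη, (e (u, η)).2, ?_⟩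
  dsimp only
  rw [dif_pos (mem_Iio.1 (e (u, η)).2)]
  exact congrArg Prod.fst (Function.leftInverse_invFun e.injective (u, η))

def boundedSets (ι : Type*) : Set (Set (ι × Ordinal.{0})) :=
  {u | ∃ γ < omega1, truncBelow u γ = u}

lemma mk_boundedSets_le {ι : Type} [Countable ι] (CH : (2 : Cardinal.{1}) ^ ℵ₀ = aleph 1) :
    #(boundedSets ι) ≤ aleph 1 := by
  have hsub : boundedSets ι ⊆ ⋃ γ : Iio omega1, 𝒫 (Set.univ ×ˢ Iio γ.1) := by
    rintro u ⟨γ, hγ, hu⟩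
    refine mem_iUnion.2 ⟨⟨γ, hγ⟩, fun p hp => ⟨trivial, ?_⟩⟩
    rw [← hu] at hp
    exact hp.2
  refine (mk_le_mk_of_subset hsub).trans ((mk_iUnion_le _).trans ?_)
  rw [mk_Iio_omega1]
  refine (mul_le_mul' le_rfl (ciSup_le' fun γ => ?_)).trans_eq (mul_eq_self (aleph0_le_aleph 1))
  rw [mk_powerset, ← CH]
  exact power_le_power_left two_ne_zero
    (le_aleph0_iff_set_countable.2 (countable_univ.prod (countable_Iio_of_lt_omega1 γ.2)))

lemma exists_enum_boundedSets {ι : Type} [Countable ι] (CH : (2 : Cardinal.{1}) ^ ℵ₀ = aleph 1) :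
    ∃ x : Ordinal.{0} → Set (ι × Ordinal.{0}), ∀ u ∈ boundedSets ι, ∀ β < omega1,
      ∃ β', β < β' ∧ β' < omega1 ∧ x β' = u := by
  have : Nonempty (boundedSets ι) := ⟨⟨∅, 0, isSuccLimit_omega1.bot_lt, sep_empty _⟩⟩
  obtain ⟨x, hx⟩ := exists_unbounded_fibers (X := boundedSets ι) (mk_boundedSets_le CH)
  refine ⟨fun β => x β, fun u hu β hβ => ?_⟩
  obtain ⟨β', hββ', hβ', hxβ'⟩ := hx ⟨u, hu⟩ β hβ
  exact ⟨β', hββ', hβ', congrArg Subtype.val hxβ'⟩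

theorem diamondOmega1_of_countable_guesses (G : Ordinal.{0} → Set (Set (ℕ × Ordinal.{0})))
    (hG : ∀ δ ∈ limOmega1, (G δ).Countable)
    (hstat : ∀ B : Set (ℕ × Ordinal.{0}), IsStatIn {δ ∈ limOmega1 | truncBelow B δ ∈ G δ}) :
    DiamondOmega1 := by
  have henum : ∀ δ, ∃ e : ℕ → Set (ℕ × Ordinal.{0}), δ ∈ limOmega1 → G δ ⊆ range e := by
    intro δ
    by_cases hδ : δ ∈ limOmega1
    · obtain ⟨e, he⟩ := countable_iff_exists_subset_range.1 (hG δ hδ)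
      exact ⟨e, fun _ => he⟩
    · exact ⟨fun _ => ∅, fun h => absurd h hδ⟩
  choose e he using henum
  by_contra hnot
  have hfail : ∀ m : ℕ, ∃ A ⊆ Iio omega1, ∃ C, IsClubIn C ∧
      ∀ δ ∈ limOmega1 ∩ C, A ∩ Iio δ ≠ {ξ | ξ < δ ∧ (m, ξ) ∈ e δ m} := by
    intro m
    by_contra! hm
    refine hnot ⟨fun δ => {ξ | ξ < δ ∧ (m, ξ) ∈ e δ m}, fun δ _ ξ hξ => hξ.1,
      fun A hA => ⟨fun δ hδ => hδ.1.1, fun C hC => ?_⟩⟩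
    obtain ⟨δ, hδ, heq⟩ := hm A hA C hC
    exact ⟨δ, ⟨hδ.1, heq⟩, hδ.2⟩
  choose A hA C hC hAC using hfail
  obtain ⟨δ, ⟨hδ, hBδ⟩, hδC⟩ := (hstat {p | p.2 ∈ A p.1}).2 (⋂ m, C m) (isClubIn_iInter hC)
  obtain ⟨m, hm⟩ := he δ hδ hBδ
  refine hAC m δ ⟨hδ, mem_iInter.1 hδC m⟩ (ext fun ξ => ?_)
  rw [mem_ofPred_eq, hm]
  exact ⟨fun ⟨hξA, hξδ⟩ => ⟨hξδ, hξA, hξδ⟩, fun ⟨_, hξA, hξδ⟩ => ⟨hξA, hξδ⟩⟩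

theorem clubSuitInf_implies_diamond_general
    (CH : (2 : Cardinal) ^ Cardinal.aleph0 = Cardinal.aleph 1)
    (a : ℝ) (ha0 : 0 < a)
    (h : ClubSuitInf limOmega1 a) : DiamondOmega1 := by
  obtain ⟨α, hα, hguess⟩ := h
  obtain ⟨x, hx⟩ := exists_enum_boundedSets (ι := ℕ) (two_power_aleph0_eq_aleph_one_transfer CH)
  refine diamondOmega1_of_countable_guesses (fun δ => densityGuesses a (fun k => x (α δ k)) δ)
    (fun δ hδ => (finite_densityGuesses ha0 hδ.2).countable) fun B => ?_
  exact isStatIn_truncBelow_mem_densityGuesses ha0 hα hguess fun γ hγ =>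
    hx _ ⟨γ, hγ, truncBelow_truncBelow_of_le le_rfl⟩

/-- Assume CH. Then for every `a ∈ (0,1]`, `♣^{inf ≥ a}` implies `◊`. -/
theorem clubSuitInf_implies_diamond
    (CH : (2 : Cardinal) ^ Cardinal.aleph0 = Cardinal.aleph 1)
    (a : ℝ) (ha0 : 0 < a) (ha1 : a ≤ 1)
    (h : ClubSuitInf limOmega1 a) : DiamondOmega1 :=
  clubSuitInf_implies_diamond_general CH a ha0 h
end

section
/- Let a ∈ (0,1), a ≤ b < √a, and let S ⊆ Lim(ω₁) be stationary. Let ⟨A_δ : δ ∈ S⟩, with A_δ = {α_{δ,n} : n < ω} strictly increasing cofinal in δ, witness ♣_S^{sup≥a}. Let A ⊆ ω₁ be uncountable such that for every δ ∈ S, for all sufficiently large n, |{k < n : α_{δ,k} ∈ A}|/n < b. Let S' be the set of δ ∈ S with limsup_n |{k < n : α_{δ,k} ∈ A}|/n ≥ a, and for δ ∈ S' let B_δ = A_δ ∩ A (which is infinite, enumerated in increasing order as {β_{δ,n} : n < ω}). Then for every uncountable B ⊆ A, the set of δ ∈ S' with limsup_n |{k < n : β_{δ,k} ∈ B}|/n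 ≥ b is stationary in ω₁. -/
open Filter Set

/-! Given a club `C` and an uncountable `B ⊆ A`, thin `B` to `B' = {min (B ∖ [0, c]) : c ∈ C}`:
an uncountable set with a point of `C` between any two of its points. The `♣` witness yields
`δ ∈ S` at which `B'` has upper density `≥ a > b²` along `α δ`; so `B'` is cofinal in `δ`,
forcing `δ ∈ C`, and `δ ∈ S'` because `B' ⊆ A`. After `n` steps of `α δ` the enumeration
`β δ` of `A_δ ∩ A` has made fewer than `b n` steps, so infinitely often the density of `B'`
along `β δ` exceeds `b² n / (b n) = b`. -/

open scoped Ordinal Topology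

lemma omega1_eq_omega_one : omega1 = ω₁ :=
  Cardinal.ord_aleph 1

lemma countable_Iic_of_lt_omega1 {o : Ordinal.{0}} (ho : o < omega1) : (Iic o).Countable := by
  rw [← Iio_insert, countable_insert, ← Cardinal.le_aleph0_iff_set_countable,
    Cardinal.mk_Iio_ordinal, Cardinal.lift_le_aleph0, ← Cardinal.lt_aleph_one_iff,
    ← Cardinal.lt_omega_iff_card_lt, ← omega1_eq_omega_one]
  exact ho

theorem not_countable_iff_forall_exists_gt {s : Set Ordinal.{0}} (hs : s ⊆ Iio omega1) :
    ¬ s.Countable ↔ ∀ c < omega1, ∃ y ∈ s, c < y := by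
  constructor
  · intro hs_unc c hc
    by_contra! hle
    exact hs_unc ((countable_Iic_of_lt_omega1 hc).mono hle)
  · intro hunb hs_cnt
    have : Countable s := hs_cnt.to_subtype
    have hsup : ⨆ y : s, Order.succ (y : Ordinal.{0}) < omega1 := by
      rw [omega1_eq_omega_one] at hs ⊢
      exact Ordinal.iSup_lt_omega_one fun y => (Cardinal.isSuccLimit_omega 1).succ_lt (hs y.2)
    obtain ⟨y, hy, hlt⟩ := hunb _ hsup
    exact (Order.lt_succ y).asymm <|
      (le_ciSup Ordinal.bddAbove_of_small (⟨y, hy⟩ : s)).trans_lt hlt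

theorem exists_subset_separated_by_club {B C : Set Ordinal.{0}} (hB : B ⊆ Iio omega1)
    (hB_unc : ¬ B.Countable) (hC : IsClubIn C) :
    ∃ B' ⊆ B, ¬ B'.Countable ∧ ∀ x ∈ B', ∀ y ∈ B', x < y → ∃ c ∈ C, x ≤ c ∧ c < y := by
  have hB_unb := (not_countable_iff_forall_exists_gt hB).1 hB_unc
  set next : Ordinal.{0} → Ordinal.{0} := fun c => sInf (B ∩ Ioi c)
  have next_mem : ∀ c ∈ C, next c ∈ B ∩ Ioi c := fun c hc =>
    csInf_mem (hB_unb c (hC.1 hc))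
  have hsub : next '' C ⊆ B := by
    rintro _ ⟨c, hc, rfl⟩
    exact (next_mem c hc).1
  refine ⟨next '' C, hsub, ?_, ?_⟩
  · rw [not_countable_iff_forall_exists_gt (hsub.trans hB)]
    intro c hc
    obtain ⟨c', hc', hcc'⟩ := hC.2.2 c hc
    exact ⟨next c', mem_image_of_mem next hc', hcc'.trans (next_mem c' hc').2⟩
  · rintro x hx _ ⟨c, hc, rfl⟩ hxy
    refine ⟨c, hc, not_lt.1 fun hcx => hxy.not_ge ?_, (next_mem c hc).2⟩
    exact csInf_le' ⟨hsub hx, hcx⟩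

theorem IsClubIn.mem_of_separated {C D : Set Ordinal.{0}} (hC : IsClubIn C) {δ : Ordinal.{0}}
    (hδ : δ < omega1) (hδ_lim : Order.IsSuccLimit δ)
    (hsep : ∀ x ∈ D, ∀ y ∈ D, x < y → ∃ c ∈ C, x ≤ c ∧ c < y)
    (hD : ∀ γ < δ, ∃ x ∈ D, γ < x ∧ x < δ) : δ ∈ C := by
  refine hC.2.1 δ hδ hδ_lim fun γ hγ => ?_
  obtain ⟨x, hxD, hγx, hxδ⟩ := hD γ hγ
  obtain ⟨y, hyD, hxy, hyδ⟩ := hD x hxδ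
  obtain ⟨c, hcC, hxc, hcy⟩ := hsep x hxD y hyD hxy
  exact ⟨c, hcC, hγx.trans_le hxc, hcy.trans hyδ⟩

theorem exists_mem_Ioo_of_infinite_setOf_mem {f : ℕ → Ordinal.{0}} {δ : Ordinal.{0}}
    {D : Set Ordinal.{0}} (hf : Monotone f) (hf_lt : ∀ n, f n < δ)
    (hf_cof : ∀ γ < δ, ∃ n, γ < f n) (hD : {k | f k ∈ D}.Infinite) :
    ∀ γ < δ, ∃ x ∈ D, γ < x ∧ x < δ := by
  intro γ hγ
  obtain ⟨n, hn⟩ := hf_cof γ hγ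
  obtain ⟨k, hkD, hnk⟩ := hD.exists_gt n
  exact ⟨f k, hkD, hn.trans_le (hf hnk.le), hf_lt k⟩

theorem Nat.tendsto_count_atTop {p : ℕ → Prop} [DecidablePred p] (hp : {k | p k}.Infinite) :
    Tendsto (Nat.count p) atTop atTop :=
  tendsto_atTop_atTop.2 fun m => ⟨Nat.nth p m, fun _ hn =>
    (Nat.count_nth_of_infinite hp m).symm.le.trans (Nat.count_monotone p hn)⟩

theorem StrictMono.eq_comp_nth_of_range_eq {γ : Type*} [Preorder γ] {f g : ℕ → γ} {s : Set γ}
    (hf : StrictMono f) (hg : StrictMono g) (hs : {k | f k ∈ s}.Infinite)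
    (h : range g = range f ∩ s) : g = f ∘ Nat.nth (f · ∈ s) := by
  refine (hg.range_inj (hf.comp (Nat.nth_strictMono hs))).1 ?_
  rw [h, range_comp, Nat.range_nth_of_infinite hs, ← image_preimage_eq_range_inter]
  rfl

section HitRatio

open scoped Classical

variable (α : ℕ → Ordinal.{0})

lemma hitRatio_nonneg (A : Set Ordinal.{0}) (n : ℕ) : 0 ≤ hitRatio α A n := by
  unfold hitRatio
  positivity

lemma hitRatio_mono {A B : Set Ordinal.{0}} (h : A ⊆ B) (n : ℕ) :
    hitRatio α A n ≤ hitRatio α B n := by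
  unfold hitRatio
  gcongr

lemma hitRatio_le_one (A : Set Ordinal.{0}) (n : ℕ) : hitRatio α A n ≤ 1 := by
  calc hitRatio α A n ≤ hitRatio α univ n := hitRatio_mono α (subset_univ A) n
    _ ≤ 1 := by unfold hitRatio; simpa using div_self_le_one (n : ℝ)

lemma isBoundedUnder_le_hitRatio (A : Set Ordinal.{0}) :
    IsBoundedUnder (· ≤ ·) atTop (hitRatio α A) :=
  isBoundedUnder_of ⟨1, hitRatio_le_one α A⟩

lemma isCoboundedUnder_le_hitRatio (A : Set Ordinal.{0}) :
    IsCoboundedUnder (· ≤ ·) atTop (hitRatio α A) :=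
  (isBoundedUnder_of ⟨0, hitRatio_nonneg α A⟩).isCoboundedUnder_le

lemma limsup_hitRatio_mono {A B : Set Ordinal.{0}} (h : A ⊆ B) :
    limsup (hitRatio α A) atTop ≤ limsup (hitRatio α B) atTop :=
  limsup_le_limsup (.of_forall (hitRatio_mono α h)) (isCoboundedUnder_le_hitRatio α A)
    (isBoundedUnder_le_hitRatio α B)

lemma tendsto_hitRatio_of_finite {A : Set Ordinal.{0}} (hA : {k | α k ∈ A}.Finite) :
    Tendsto (hitRatio α A) atTop (𝓝 0) := by
  refine tendsto_of_tendsto_of_tendsto_of_le_of_le tendsto_const_nhds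
    (tendsto_const_div_atTop_nhds_zero_nat (hA.toFinset.card : ℝ)) (hitRatio_nonneg α A)
    fun n => ?_
  unfold hitRatio
  gcongr
  exact fun k hk => by simpa using (Finset.mem_filter.1 hk).2

lemma infinite_setOf_mem_of_limsup_hitRatio_pos {A : Set Ordinal.{0}}
    (h : 0 < limsup (hitRatio α A) atTop) : {k | α k ∈ A}.Infinite := fun hA =>
  h.ne' (tendsto_hitRatio_of_finite α hA).limsup_eq

lemma card_filter_comp_nth_count {A D : Set Ordinal.{0}} (hD : D ⊆ A)
    (hA : {k | α k ∈ A}.Infinite) (n : ℕ) :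
    ((Finset.range (Nat.count (α · ∈ A) n)).filter (fun j => α (Nat.nth (α · ∈ A) j) ∈ D)).card
      = ((Finset.range n).filter (fun k => α k ∈ D)).card := by
  refine Finset.card_bij' (fun j _ => Nat.nth (α · ∈ A) j) (fun k _ => Nat.count (α · ∈ A) k)
    ?_ ?_ (fun j _ => Nat.count_nth_of_infinite hA j) (fun k hk => Nat.nth_count ?_)
  · intro j hj
    simp only [Finset.mem_filter, Finset.mem_range] at hj ⊢
    exact ⟨Nat.nth_lt_of_lt_count hj.1, hj.2⟩
  · intro k hk
    simp only [Finset.mem_filter, Finset.mem_range] at hk ⊢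
    exact ⟨Nat.count_strict_mono (hD hk.2) hk.1, by rw [Nat.nth_count (hD hk.2)]; exact hk.2⟩
  · exact hD (Finset.mem_filter.1 hk).2

lemma hitRatio_comp_nth_count {A D : Set Ordinal.{0}} (hD : D ⊆ A)
    (hA : {k | α k ∈ A}.Infinite) (n : ℕ) :
    hitRatio (α ∘ Nat.nth (α · ∈ A)) D (Nat.count (α · ∈ A) n)
      = hitRatio α D n / hitRatio α A n := by
  unfold hitRatio
  rw [Function.comp_def, card_filter_comp_nth_count α hD hA, Nat.count_eq_card_filter_range]
  rcases eq_or_ne n 0 with rfl | hn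
  · simp
  · exact (div_div_div_cancel_right₀ (Nat.cast_ne_zero.2 hn) _ _).symm

theorem le_limsup_hitRatio_comp_nth {A D : Set Ordinal.{0}} {b c : ℝ} (hD : D ⊆ A)
    (hA : {k | α k ∈ A}.Infinite) (hA_lt : ∀ᶠ n in atTop, hitRatio α A n < b)
    (hD_gt : ∃ᶠ n in atTop, b * c < hitRatio α D n) :
    c ≤ limsup (hitRatio (α ∘ Nat.nth (α · ∈ A)) D) atTop := by
  refine le_limsup_of_frequently_le ?_ (isBoundedUnder_le_hitRatio _ D)
  refine (Nat.tendsto_count_atTop hA).frequently ((hD_gt.and_eventually hA_lt).mono ?_)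
  rintro n ⟨hDn, hAn⟩
  rw [hitRatio_comp_nth_count α hD hA]
  have hDA := hitRatio_mono α hD n
  have hD0 := hitRatio_nonneg α D n
  rcases le_or_gt c 0 with hc | hc
  · exact hc.trans (div_nonneg hD0 (hD0.trans hDA))
  · have hb : 0 < b := hD0.trans_lt (hDA.trans_lt hAn)
    rw [le_div_iff₀ (by nlinarith)]
    nlinarith

end HitRatio

theorem clubSuitSup_claim_general (a b : ℝ) (ha0 : 0 < a)
    (hab : a ≤ b) (hb : b < Real.sqrt a)
    (S : Set Ordinal.{0}) (hS : S ⊆ limOmega1)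
    (α : Ordinal.{0} → ℕ → Ordinal.{0}) (hα : GoodSeq S α)
    (hwit : ∀ A : Set Ordinal.{0}, A ⊆ Set.Iio omega1 → ¬ A.Countable →
      ∃ δ ∈ S, a ≤ Filter.limsup (hitRatio (α δ) A) Filter.atTop)
    (A : Set Ordinal.{0}) (hA1 : A ⊆ Set.Iio omega1)
    (hsmall : ∀ δ ∈ S, ∀ᶠ n in Filter.atTop, hitRatio (α δ) A n < b)
    (β : Ordinal.{0} → ℕ → Ordinal.{0})
    (hβ : ∀ δ ∈ {δ ∈ S | a ≤ Filter.limsup (hitRatio (α δ) A) Filter.atTop},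
      StrictMono (β δ) ∧ Set.range (β δ) = Set.range (α δ) ∩ A) :
    ∀ B : Set Ordinal.{0}, B ⊆ A → ¬ B.Countable →
      IsStatIn {δ ∈ {δ ∈ S | a ≤ Filter.limsup (hitRatio (α δ) A) Filter.atTop} |
        b ≤ Filter.limsup (hitRatio (β δ) B) Filter.atTop} := by
  intro B hBA hB_unc
  refine ⟨fun δ hδ => (hS hδ.1.1).1, fun C hC => ?_⟩
  obtain ⟨B', hB'B, hB'_unc, hsep⟩ := exists_subset_separated_by_club (hBA.trans hA1) hB_unc hC
  have hB'A : B' ⊆ A := hB'B.trans hBA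
  obtain ⟨δ, hδS, hδB'⟩ := hwit B' (hB'A.trans hA1) hB'_unc
  have hδA : a ≤ limsup (hitRatio (α δ) A) atTop := hδB'.trans (limsup_hitRatio_mono _ hB'A)
  obtain ⟨hα_mono, hα_lt, hα_cof⟩ := hα δ hδS
  have hB'_inf := infinite_setOf_mem_of_limsup_hitRatio_pos _ (ha0.trans_le hδB')
  have hA_inf : {k | α δ k ∈ A}.Infinite := hB'_inf.mono fun k hk => hB'A hk
  have hδC : δ ∈ C := hC.mem_of_separated (hS hδS).1 (hS hδS).2 hsep
    (exists_mem_Ioo_of_infinite_setOf_mem hα_mono.monotone hα_lt hα_cof hB'_inf)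
  have hbb : b * b < a := by
    rw [← sq, ← Real.lt_sqrt (ha0.le.trans hab)]
    exact hb
  obtain ⟨hβ_mono, hβ_range⟩ := hβ δ ⟨hδS, hδA⟩
  refine ⟨δ, ⟨⟨hδS, hδA⟩, ?_⟩, hδC⟩
  rw [hα_mono.eq_comp_nth_of_range_eq hβ_mono hA_inf hβ_range]
  calc b ≤ limsup (hitRatio (α δ ∘ Nat.nth (α δ · ∈ A)) B') atTop :=
        le_limsup_hitRatio_comp_nth _ hB'A hA_inf (hsmall δ hδS)
          (frequently_lt_of_lt_limsup (isCoboundedUnder_le_hitRatio _ _) (hbb.trans_le hδB'))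
    _ ≤ limsup (hitRatio (α δ ∘ Nat.nth (α δ · ∈ A)) B) atTop := limsup_hitRatio_mono _ hB'B

/-- Claim 7.4: Let `a ∈ (0,1)`, `a ≤ b < √a`, `S ⊆ Lim(ω₁)` stationary, and let
`⟨A_δ : δ ∈ S⟩` (given by the cofinal enumerations `α δ`) witness `♣_S^{sup ≥ a}`.
Let `A ⊆ ω₁` be uncountable such that for every `δ ∈ S` the hit ratio of `A` along
`α δ` is eventually below `b`.  Let `S'` be the set of `δ ∈ S` where the limsup of this
ratio is still `≥ a`, and for `δ ∈ S'` let `β δ` enumerate `B_δ = A_δ ∩ A` in increasing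
order.  Then for every uncountable `B ⊆ A`, the set of `δ ∈ S'` at which the limsup of
the hit ratio of `B` along `β δ` is `≥ b` is stationary. -/
theorem clubSuitSup_claim (a b : ℝ) (ha0 : 0 < a) (ha1 : a < 1)
    (hab : a ≤ b) (hb : b < Real.sqrt a)
    (S : Set Ordinal.{0}) (hS : S ⊆ limOmega1) (hstat : IsStatIn S)
    (α : Ordinal.{0} → ℕ → Ordinal.{0}) (hα : GoodSeq S α)
    (hwit : ∀ A : Set Ordinal.{0}, A ⊆ Set.Iio omega1 → ¬ A.Countable →
      ∃ δ ∈ S, a ≤ Filter.limsup (hitRatio (α δ) A) Filter.atTop)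
    (A : Set Ordinal.{0}) (hA1 : A ⊆ Set.Iio omega1) (hA2 : ¬ A.Countable)
    (hsmall : ∀ δ ∈ S, ∀ᶠ n in Filter.atTop, hitRatio (α δ) A n < b)
    (β : Ordinal.{0} → ℕ → Ordinal.{0})
    (hβ : ∀ δ ∈ {δ ∈ S | a ≤ Filter.limsup (hitRatio (α δ) A) Filter.atTop},
      StrictMono (β δ) ∧ Set.range (β δ) = Set.range (α δ) ∩ A) :
    ∀ B : Set Ordinal.{0}, B ⊆ A → ¬ B.Countable →
      IsStatIn {δ ∈ {δ ∈ S | a ≤ Filter.limsup (hitRatio (α δ) A) Filter.atTop} |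
        b ≤ Filter.limsup (hitRatio (β δ) B) Filter.atTop} :=
  clubSuitSup_claim_general a b ha0 hab hb S hS α hα hwit A hA1 hsmall β hβ
end
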